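/- Let P ≥ 2 and d ≥ 1 be integers, and let a₁,...,a_d be integers with |aₛ| ≤ P − 1 for all s and a_d ≠ 0. Then the integer C = a_d P^d + a_{d−1} P^{d−1} + ... + a₁ P satisfies |C| ≥ P and sgn(C) = sgn(a_d). -/
import Mathlib

/-- Let `P ≥ 2`, `d ≥ 1`, and let `a₁, …, a_d` be integers with `|aₛ| ≤ P - 1`
and `a_d ≠ 0`.  Then `C = Σ_{s=1}^{d} aₛ Pˢ` satisfies `|C| ≥ P` and
`sgn C = sgn (a_d)`. -/
theorem leading_term_dominates (P : ℤ) (hP : 2 ≤ P) (d : ℕ) (hd : 1 ≤ d)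
    (a : ℕ → ℤ) (ha : ∀ s ∈ Finset.Icc 1 d, |a s| ≤ P - 1) (had : a d ≠ 0)
    (C : ℤ) (hC : C = ∑ s ∈ Finset.Icc 1 d, a s * P ^ s) :
    P ≤ |C| ∧ C.sign = (a d).sign := by
  obtain ⟨m, rfl⟩ : ∃ m, d = m + 1 := ⟨d - 1, (Nat.succ_pred_eq_of_pos hd).symm⟩
  have hgeom : ∀ n : ℕ, ∑ s ∈ Finset.Icc 1 n, (P - 1) * P ^ s = P ^ (n + 1) - P := by
    intro n
    induction n with
    | zero => simp
    | succ k ih =>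
      rw [Finset.sum_Icc_succ_top (by omega), ih]
      ring
  have hsplit : C = (∑ s ∈ Finset.Icc 1 m, a s * P ^ s) + a (m + 1) * P ^ (m + 1) := by
    rw [hC, Finset.sum_Icc_succ_top (by omega)]
  set R := ∑ s ∈ Finset.Icc 1 m, a s * P ^ s with hR
  have hRbound : |R| ≤ P ^ (m + 1) - P := by
    calc |R| ≤ ∑ s ∈ Finset.Icc 1 m, |a s * P ^ s| := Finset.abs_sum_le_sum_abs _ _
    _ ≤ ∑ s ∈ Finset.Icc 1 m, (P - 1) * P ^ s := by
        apply Finset.sum_le_sum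
        intro s hs
        rw [abs_mul, abs_pow, abs_of_nonneg (by linarith : (0:ℤ) ≤ P)]
        have hs' := Finset.mem_Icc.mp hs
        have := ha s (Finset.mem_Icc.mpr ⟨hs'.1, by omega⟩)
        have hp : (0:ℤ) ≤ P ^ s := by positivity
        exact mul_le_mul_of_nonneg_right this hp
    _ = P ^ (m + 1) - P := hgeom m
  have hPm : (0:ℤ) < P ^ (m + 1) := by positivity
  have habs := abs_le.mp hRbound
  rcases lt_or_gt_of_ne had with hneg | hpos
  · have h1 : a (m + 1) ≤ -1 := by omega
    have h2 : a (m + 1) * P ^ (m + 1) ≤ -P ^ (m + 1) := by nlinarith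
    have hCneg : C ≤ -P := by linarith [hsplit, habs.2]
    constructor
    · rw [abs_of_nonpos (by linarith)]; linarith
    · rw [Int.sign_eq_neg_one_of_neg (by linarith), Int.sign_eq_neg_one_of_neg hneg]
  · have h1 : 1 ≤ a (m + 1) := hpos
    have h2 : P ^ (m + 1) ≤ a (m + 1) * P ^ (m + 1) := by nlinarith
    have hCpos : P ≤ C := by linarith [hsplit, habs.1]
    constructor
    · rw [abs_of_nonneg (by linarith)]; exact hCpos
    · rw [Int.sign_eq_one_of_pos (by linarith), Int.sign_eq_one_of_pos hpos]
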